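/- Let n ≥ 1 and let r ≡ 2 (mod 4), r ≥ 2. Then, as polynomials in q, Σ_{π ∈ A_{r,n}} q^{finv_A(π)} = 2^{n−1} · Π_{i=1}^{n} [(r/2)·i]_q, where [m]_q = 1 + q + ⋯ + q^{m−1}, and finv_A(π) = (r/2)·inv(|π|) + Σ_{i=1}^{n} (c_i(π) ⊘ 2) with c_i(π) = r − z_i(π^{−1}) (taken mod r) and inv(|π|) the ordinary inversion number of the underlying permutation |π|. -/

import Mathlib

open Multiplicative

namespace ACP

/-- The action of `Sₙ` on color vectors by permuting coordinates. -/
def permAct (r n : ℕ) : Equiv.Perm (Fin n) →* MulAut (Fin n → Multiplicative (ZMod r)) where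
  toFun τ :=
    { toFun := fun z => z ∘ τ.symm
      invFun := fun z => z ∘ τ
      left_inv := fun z => by ext i; simp
      right_inv := fun z => by ext i; simp
      map_mul' := fun z w => rfl }
  map_one' := by ext z i; rfl
  map_mul' a b := by ext z i; rfl

/-- The group of colored permutations `G_{r,n} = ℤ_r ≀ Sₙ`. -/
abbrev G (r n : ℕ) : Type := (Fin n → Multiplicative (ZMod r)) ⋊[permAct r n] Equiv.Perm (Fin n)

/-- The Coxeter-like generators: `gen r n 0 = s₀` colors the digit 1 by one color,
`gen r n i = sᵢ` (for `1 ≤ i ≤ n-1`) is the adjacent transposition `(i, i+1)`. -/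
def gen (r n : ℕ) (i : ℕ) : G r n :=
  if h : 0 < i ∧ i < n then
    ⟨1, Equiv.swap ⟨i - 1, by omega⟩ ⟨i, h.2⟩⟩
  else
    ⟨fun j => if (j : ℕ) = 0 then ofAdd (1 : ZMod r) else 1, 1⟩

def zmod2ToUnits : Multiplicative (ZMod 2) →* ℤˣ where
  toFun z := (-1) ^ (toAdd z).val
  map_one' := rfl
  map_mul' := by decide

def csumHom (r n : ℕ) (hr : 2 ∣ r) :
    (Fin n → Multiplicative (ZMod r)) →* Multiplicative (ZMod 2) where
  toFun z := ofAdd (∑ i, ZMod.castHom hr (ZMod 2) (toAdd (z i)))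
  map_one' := by simp
  map_mul' z w := by
    have h : ∀ i, ZMod.castHom hr (ZMod 2) (toAdd ((z * w) i))
        = ZMod.castHom hr (ZMod 2) (toAdd (z i)) + ZMod.castHom hr (ZMod 2) (toAdd (w i)) :=
      fun i => map_add _ _ _
    simp only [h, Finset.sum_add_distrib, ofAdd_add]

/-- The sign character of `G_{r,n}` (for even `r`): sends every Coxeter-like
generator `sᵢ` to `-1`. -/
noncomputable def sgn (r n : ℕ) (hr : 2 ∣ r) : G r n →* ℤˣ :=
  SemidirectProduct.lift (zmod2ToUnits.comp (csumHom r n hr)) Equiv.Perm.sign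
    (by
      intro g
      refine MonoidHom.ext fun z => ?_
      have h1 : ∀ a x : ℤˣ, a * x * a⁻¹ = x := fun a x => by
        rw [mul_comm a x, mul_inv_cancel_right]
      simp only [MonoidHom.comp_apply, MulEquiv.coe_toMonoidHom, MulAut.conj_apply, h1]
      congr 1
      show csumHom r n hr (z ∘ g.symm) = csumHom r n hr z
      unfold csumHom
      simp only [MonoidHom.coe_mk, OneHom.coe_mk]
      congr 1
      exact Equiv.sum_comp g.symm fun j => ZMod.castHom hr (ZMod 2) (toAdd (z j)))

/-- The group of alternating colored permutations `A_{r,n}`: the kernel of the sign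
character of `G_{r,n}`. -/
noncomputable def Arn (r n : ℕ) (hr : 2 ∣ r) : Subgroup (G r n) := (sgn r n hr).ker

/-- The generators of `A_{r,n}`: `agen r n 0 = a₀ = s₀²` and
`agen r n i = aᵢ = s₀^{r/2} sᵢ` for `i ≥ 1`. -/
def agen (r n : ℕ) (i : ℕ) : G r n :=
  if i = 0 then gen r n 0 ^ 2 else gen r n 0 ^ (r / 2) * gen r n i

/-- The generating set `𝒜 = {a₀, a₁, a₁⁻¹, a₂, …, a_{n-1}}` of `A_{r,n}`. -/
def Aset (r n : ℕ) : Set (G r n) :=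
  {x | ∃ i ≤ n - 1, x = agen r n i} ∪ {(agen r n 1)⁻¹}

/-- The Coxeter-like generating set `{s₀, …, s_{n-1}}` of `G_{r,n}`. -/
def Sset (r n : ℕ) : Set (G r n) := {x | ∃ i < n, x = gen r n i}

/-- Word length of `g` with respect to a generating set `B`. -/
noncomputable def wordLength {H : Type*} [Group H] (B : Set H) (g : H) : ℕ :=
  sInf {k | ∃ w : List H, (∀ x ∈ w, x ∈ B) ∧ w.prod = g ∧ w.length = k}

/-- The element `a₁² ∈ A_{r,n}`. -/
noncomputable def a1sq (r n : ℕ) (hr : 2 ∣ r) : ↥(Arn r n hr) :=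
  ⟨agen r n 1 ^ 2, by rw [Arn, MonoidHom.mem_ker, map_pow]; exact Int.units_sq _⟩

/-- The operator `a ⊘ 2` : the residue mod `r/2` of `a/2` (`a` even) or of
`(a + r/2)/2` (`a` odd). -/
def oslash (r a : ℕ) : ℕ :=
  if a % 2 = 0 then (a / 2) % (r / 2) else ((a + r / 2) / 2) % (r / 2)

/-- `z_i(π)`, the color of digit `i+1` of `π`, as a natural number in `{0, …, r-1}`. -/
def zval (r n : ℕ) (π : G r n) (i : Fin n) : ℕ := (toAdd (π.left i)).val

/-- `csum(π) = Σ z_i(π)`. -/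
def csum (r n : ℕ) (π : G r n) : ℕ := ∑ i, zval r n π i

/-- Rank of the colored letter `b^{[c]}` (with `1 ≤ b ≤ n`, `0 ≤ c ≤ r-1`) in the
length order `n^{[r-1]} < ⋯ < 1^{[1]} < 1 < 2 < ⋯ < n`. -/
def rank (r n : ℕ) (b c : ℕ) : ℕ :=
  if c = 0 then n * (r - 1) + (b - 1) else (n - b) * (r - 1) + (r - 1 - c)

/-- Rank (in the length order) of the letter in position `i` of the window of `π`. -/
def colRank (r n : ℕ) (π : G r n) (i : Fin n) : ℕ :=
  rank r n ((π.right i : ℕ) + 1) (zval r n π (π.right i))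

/-- The inversion number of `π ∈ G_{r,n}` with respect to the length order. -/
noncomputable def inv (r n : ℕ) (π : G r n) : ℕ :=
  Nat.card {p : Fin n × Fin n // p.1 < p.2 ∧ colRank r n π p.2 < colRank r n π p.1}

/-- The ordinary inversion number of a permutation. -/
noncomputable def invPerm (n : ℕ) (τ : Equiv.Perm (Fin n)) : ℕ :=
  Nat.card {p : Fin n × Fin n // p.1 < p.2 ∧ τ p.2 < τ p.1}

/-- The covering map `p : A_{r,n} → G_{r/2,n}`, `p(z, τ) = ((zᵢ ⊘ 2)ᵢ, τ)`. -/
def pmap (r n : ℕ) (π : G r n) : G (r / 2) n :=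
  ⟨fun i => ofAdd ((oslash r (zval r n π i) : ZMod (r / 2))), π.right⟩

/-- The section `s : G_{r/2,n} → A_{r,n}`: doubles all colors (mod `r`), adding `r/2`
to the color of the digit `1` when `inv(|π|)` is odd. -/
noncomputable def smap (r n : ℕ) (π : G (r / 2) n) : G r n :=
  ⟨fun d => ofAdd
      (((2 * zval (r / 2) n π d +
        if (d : ℕ) = 0 ∧ invPerm n π.right % 2 = 1 then r / 2 else 0 : ℕ) : ZMod r)),
   π.right⟩

/-- `c(π) = Σ_{i : z_i(π) ≠ 0} (i - 1)` (digits are `1`-based). -/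
def cstat (r n : ℕ) (π : G r n) : ℕ :=
  ∑ i : Fin n, if zval r n π i ≠ 0 then (i : ℕ) else 0

/-- The number of absolute transparent inversions of `π`. -/
noncomputable def tinv (r n : ℕ) (π : G r n) : ℕ :=
  Nat.card {p : Fin n × Fin n //
    zval r n π p.1 = r / 2 ∧ p.2 < p.1 ∧ π.right⁻¹ p.1 < π.right⁻¹ p.2}

/-- The (digit-indexed) Lehmer code `l_i = #{j : j > i, τ⁻¹(i) > τ⁻¹(j)}`. -/
noncomputable def lehmer (n : ℕ) (τ : Equiv.Perm (Fin n)) (i : Fin n) : ℕ :=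
  Nat.card {j : Fin n // i < j ∧ τ⁻¹ j < τ⁻¹ i}


/-- `μ(π)`: the minimum of `β(ω) + n(ω)` over all factorizations
`ω = b₀ s₀^{i₁} b₁ ⋯ s₀^{i_{k+1}} b_{k+1}` of `π`, where each `b_u` is a word in
`s₁, …, s_{n-1}` only, `n(ω)` is the number of letters `sᵢ` with `i ≠ 0`, and
`β(ω) = Σ_u (i_u ⊘ 2)`. -/
noncomputable def mu (r n : ℕ) (π : G r n) : ℕ :=
  sInf {m | ∃ (b₀ : List ℕ) (L : List (ℕ × List ℕ)),
    (∀ x ∈ b₀, 1 ≤ x ∧ x ≤ n - 1) ∧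
    (∀ q ∈ L, ∀ x ∈ q.2, 1 ≤ x ∧ x ≤ n - 1) ∧
    π = (b₀.map (gen r n)).prod *
        (L.map (fun q => gen r n 0 ^ q.1 * (q.2.map (gen r n)).prod)).prod ∧
    m = (L.map (fun q => oslash r q.1)).sum +
        (b₀.length + (L.map (fun q => q.2.length)).sum)}

/-- The flag-inversion number on `A_{r,n}`:
`finv_A(π) = (r/2)·inv(|π|) + Σᵢ (cᵢ(π) ⊘ 2)` where `cᵢ(π) = r - zᵢ(π⁻¹) (mod r)`. -/
noncomputable def finvA (r n : ℕ) (π : G r n) : ℕ :=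
  (r / 2) * invPerm n π.right + ∑ i, oslash r ((r - zval r n π⁻¹ i) % r)

/-- The number of (colored) right-to-left minima of `π` whose color is not in `{0, r/2}`. -/
noncomputable def rtlMinA (r n : ℕ) (π : G r n) : ℕ :=
  Nat.card {i : Fin n // (∀ j : Fin n, i < j → π.right i < π.right j) ∧
    zval r n π (π.right i) ≠ 0 ∧ zval r n π (π.right i) ≠ r / 2}

/-- The defining relators of the Coxeter-like presentation of `A_{r,n}` on generators
`x₀, …, x_{n-1}`. -/
def rels (r n : ℕ) : Set (FreeGroup (Fin n)) :=
  {w | ∃ i : Fin n, (i : ℕ) = 0 ∧ w = FreeGroup.of i ^ (r / 2)} ∪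
  {w | ∃ i : Fin n, (i : ℕ) = 1 ∧ w = FreeGroup.of i ^ 4} ∪
  {w | ∃ i : Fin n, 2 ≤ (i : ℕ) ∧ w = FreeGroup.of i ^ 2} ∪
  {w | ∃ i j : Fin n, (i : ℕ) ≠ 1 ∧ (j : ℕ) ≠ 1 ∧ (i : ℕ) + 1 < (j : ℕ) ∧
    w = FreeGroup.of i * FreeGroup.of j * (FreeGroup.of i)⁻¹ * (FreeGroup.of j)⁻¹} ∪
  {w | ∃ i j : Fin n, 1 ≤ (i : ℕ) ∧ (j : ℕ) = (i : ℕ) + 1 ∧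
    w = (FreeGroup.of i * FreeGroup.of j) ^ 3} ∪
  {w | ∃ i j : Fin n, (i : ℕ) = 0 ∧ (j : ℕ) = 1 ∧
    w = (FreeGroup.of i * FreeGroup.of j) ^ (2 * r)} ∪
  {w | ∃ i j : Fin n, (i : ℕ) = 0 ∧ (j : ℕ) = 1 ∧
    w = (FreeGroup.of i * (FreeGroup.of j)⁻¹) ^ (2 * r)} ∪
  {w | ∃ i j : Fin n, (i : ℕ) = 0 ∧ (j : ℕ) = 1 ∧
    w = FreeGroup.of i * FreeGroup.of j ^ 2 * (FreeGroup.of i)⁻¹ * (FreeGroup.of j ^ 2)⁻¹} ∪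
  {w | ∃ i j : Fin n, (i : ℕ) = 1 ∧ 2 < (j : ℕ) ∧
    w = FreeGroup.of i * FreeGroup.of j * FreeGroup.of i * (FreeGroup.of j)⁻¹}

end ACP

/-! The colour vector and the underlying permutation of `π = (z, τ) ∈ A_{r,n}` contribute
independently to `finv_A`: `finv_A(z, τ) = (r/2)·inv(τ) + Σᵢ (zᵢ ⊘ 2)`, and `π ∈ A_{r,n}` only
prescribes the parity of `Σᵢ zᵢ` in terms of `τ`. Since `r/2` is odd, `a ↦ (a mod 2, a ⊘ 2)` is a
bijection `ℤ_r ≃ ℤ_2 × {0, …, r/2 - 1}` (the Chinese remainder theorem, followed by halving in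
`ℤ_{r/2}`), so for every `τ` the colour vectors contribute `2^{n-1} [r/2]_q^n`. The permutations
contribute `Σ_τ q^{(r/2)·inv τ} = Πᵢ [i]_{q^{r/2}}` (MacMahon), and
`[r/2]_q · [i]_{q^{r/2}} = [(r/2)·i]_q`. -/

open Finset

theorem SemidirectProduct.finsum_mem_eq_sum_sum {N G M : Type*} [Group N] [Group G]
    {φ : G →* MulAut N} [Fintype N] [Fintype G] [AddCommMonoid M] (s : Set (N ⋊[φ] G))
    (f : N ⋊[φ] G → M) : ∑ᶠ x ∈ s, f x = ∑ g, ∑ n, s.indicator f ⟨n, g⟩ := by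
  rw [finsum_mem_def, ← finsum_comp_equiv SemidirectProduct.equivProd.symm,
    finsum_eq_sum_of_fintype, Fintype.sum_prod_type_right]
  rfl

theorem geom_sum_mul_geom_sum_pow {R : Type*} [CommSemiring R] (x : R) (m k : ℕ) :
    (∑ i ∈ range m, x ^ i) * ∑ j ∈ range k, (x ^ m) ^ j = ∑ i ∈ range (m * k), x ^ i := by
  induction k with
  | zero => simp
  | succ k ih =>
    rw [sum_range_succ, mul_add, ih, Nat.mul_succ, sum_range_add, sum_mul]
    congr 1
    refine sum_congr rfl fun i _ => ?_
    ring

theorem sum_pow_sum_val_fin {R : Type*} [CommSemiring R] (x : R) (n m : ℕ) :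
    ∑ v : Fin n → Fin m, x ^ (∑ i, (v i : ℕ)) = (∑ k ∈ range m, x ^ k) ^ n := by
  simp only [← prod_pow_eq_pow_sum, ← Fin.sum_univ_eq_sum_range]
  rw [← Fin.prod_const, Fintype.prod_sum]

theorem card_filter_sum_eq_card_pow {A : Type*} [AddCommGroup A] [Fintype A] [DecidableEq A]
    (k : ℕ) (a : A) : #{ε : Fin (k + 1) → A | ∑ i, ε i = a} = Fintype.card A ^ k := by
  rw [← Fintype.card_subtype]
  trans Fintype.card (Fin k → A)
  · refine Fintype.card_congr
      { toFun := fun ε => Fin.tail ε.1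
        invFun := fun t => ⟨Fin.cons (a - ∑ i, t i) t, by simp [Fin.sum_univ_succ]⟩
        left_inv := fun ⟨ε, hε⟩ => ?_
        right_inv := fun t => Fin.tail_cons _ _ }
    rw [Fin.sum_univ_succ] at hε
    ext1
    simp only [← hε, Fin.tail, add_sub_cancel_right]
    exact Fin.cons_self_tail ε
  · simp

section Inversions

variable {α : Type*} [LinearOrder α]

def invCount {n : ℕ} (f : Fin n → α) : ℕ := ∑ i, #{j | i < j ∧ f j < f i}

theorem invCount_cons {n : ℕ} (a : α) (f : Fin n → α) :
    invCount (Fin.cons a f : Fin (n + 1) → α) = #{j | f j < a} + invCount f := by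
  simp [invCount, Fin.sum_univ_succ, Fin.card_filter_univ_succ, Fin.succ_lt_succ_iff]

theorem invCount_comp_strictMono {β : Type*} [LinearOrder β] {n : ℕ} {g : α → β}
    (hg : StrictMono g) (f : Fin n → α) : invCount (g ∘ f) = invCount f := by
  simp [invCount, hg.lt_iff_lt]

end Inversions

theorem Fin.card_filter_succAbove_lt {n : ℕ} (p : Fin (n + 1)) :
    #{k : Fin n | p.succAbove k < p} = p := by
  simp_rw [Fin.succAbove_lt_iff_castSucc_lt, Fin.lt_def, Fin.val_castSucc]
  rw [Fin.card_filter_val_lt]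
  omega

def insertPerm {n : ℕ} (p : Fin (n + 1)) (σ : Equiv.Perm (Fin n)) : Equiv.Perm (Fin (n + 1)) :=
  (finSuccEquiv n).trans ((Equiv.optionCongr σ).trans (finSuccEquiv' p).symm)

theorem coe_insertPerm {n : ℕ} (p : Fin (n + 1)) (σ : Equiv.Perm (Fin n)) :
    ⇑(insertPerm p σ) = Fin.cons p (p.succAbove ∘ σ) := by
  funext i
  cases i using Fin.cases <;> simp [insertPerm]

theorem insertPerm_bijective (n : ℕ) :
    Function.Bijective fun q : Fin (n + 1) × Equiv.Perm (Fin n) => insertPerm q.1 q.2 := by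
  refine (Fintype.bijective_iff_injective_and_card _).2 ⟨?_, ?_⟩
  · rintro ⟨p, σ⟩ ⟨p', σ'⟩ h
    have h' := congrArg DFunLike.coe h
    simp only [coe_insertPerm, Fin.cons_inj] at h'
    obtain ⟨rfl, hσ⟩ := h'
    rw [Equiv.ext fun x => Fin.succAbove_right_injective (congrFun hσ x)]
  · simp [Fintype.card_perm, Nat.factorial_succ]

theorem invCount_insertPerm {n : ℕ} (p : Fin (n + 1)) (σ : Equiv.Perm (Fin n)) :
    invCount (insertPerm p σ) = p + invCount σ := by
  have hσ : #{j | p.succAbove (σ j) < p} = #{k | p.succAbove k < p} := by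
    simpa only [card_filter] using Equiv.sum_comp σ fun k => if p.succAbove k < p then 1 else 0
  rw [coe_insertPerm, invCount_cons, invCount_comp_strictMono (Fin.strictMono_succAbove p)]
  simp only [Function.comp_apply, hσ, Fin.card_filter_succAbove_lt]

theorem ZMod.sub_val_neg_mod {r : ℕ} [NeZero r] (a : ZMod r) : (r - (-a).val) % r = a.val := by
  rw [← ZMod.val_natCast, Nat.cast_sub (ZMod.val_le _)]
  simp

namespace ACP

theorem invPerm_eq_invCount (n : ℕ) (τ : Equiv.Perm (Fin n)) : invPerm n τ = invCount τ := by
  rw [invPerm, Nat.card_eq_fintype_card, Fintype.card_subtype, card_filter,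
    Fintype.sum_prod_type]
  simp only [← card_filter]
  rfl

theorem sum_pow_invPerm {R : Type*} [CommSemiring R] (y : R) (n : ℕ) :
    ∑ τ : Equiv.Perm (Fin n), y ^ invPerm n τ = ∏ i ∈ range n, ∑ k ∈ range (i + 1), y ^ k := by
  simp only [invPerm_eq_invCount]
  induction n with
  | zero => simp [invCount]
  | succ n ih =>
    rw [← (insertPerm_bijective n).sum_comp, Fintype.sum_prod_type]
    simp only [invCount_insertPerm, pow_add, ← sum_mul_sum, ih, prod_range_succ,
      Fin.sum_univ_eq_sum_range (y ^ ·), mul_comm]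

theorem oslash_lt {r : ℕ} (hr : 0 < r / 2) (a : ℕ) : oslash r a < r / 2 := by
  unfold oslash; split <;> exact Nat.mod_lt _ hr

theorem two_mul_oslash_modEq {r : ℕ} (hr : r % 4 = 2) (a : ℕ) :
    2 * oslash r a ≡ a [MOD r / 2] := by
  unfold oslash
  split_ifs with ha
  · refine ((Nat.mod_modEq _ _).mul_left 2).trans ?_
    rw [Nat.mul_div_cancel' (Nat.dvd_of_mod_eq_zero ha)]
  · refine ((Nat.mod_modEq _ _).mul_left 2).trans ?_
    rw [Nat.mul_div_cancel' (by omega)]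
    exact Nat.add_modEq_right

theorem oslash_injOn {r : ℕ} (hr : r % 4 = 2) {a b : ℕ} (ha : a < r) (hb : b < r)
    (h2 : a ≡ b [MOD 2]) (h : oslash r a = oslash r b) : a = b := by
  have hm : a ≡ b [MOD r / 2] :=
    (two_mul_oslash_modEq hr a).symm.trans (h ▸ two_mul_oslash_modEq hr b)
  have hcop : Nat.Coprime 2 (r / 2) := by
    rw [Nat.coprime_two_left]; exact Nat.odd_iff.2 (by omega)
  have h := (Nat.modEq_and_modEq_iff_modEq_mul hcop).1 ⟨h2, hm⟩
  rw [show 2 * (r / 2) = r by omega] at h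
  exact Nat.ModEq.eq_of_lt_of_lt h ha hb

noncomputable def colorEquiv {r : ℕ} (hr : r % 4 = 2) : ZMod r ≃ ZMod 2 × Fin (r / 2) :=
  haveI : NeZero r := ⟨by omega⟩
  Equiv.ofBijective
    (fun a => ((a.val : ZMod 2), ⟨oslash r a.val, oslash_lt (by omega) _⟩)) <| by
    refine (Fintype.bijective_iff_injective_and_card _).2 ⟨fun a b hab => ?_, ?_⟩
    · simp only [Prod.mk.injEq, Fin.mk.injEq, ZMod.natCast_eq_natCast_iff] at hab
      exact ZMod.val_injective r (oslash_injOn hr (ZMod.val_lt a) (ZMod.val_lt b) hab.1 hab.2)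
    · simp only [ZMod.card, Fintype.card_prod, Fintype.card_fin]
      omega

theorem sum_colorVectors_of_parity {R : Type*} [CommSemiring R] (x : R) {r n : ℕ} [NeZero r]
    (hr : r % 4 = 2) (hn : 1 ≤ n) (e : ZMod 2) :
    ∑ z : Fin n → Multiplicative (ZMod r),
      (if ∑ i, ((toAdd (z i)).val : ZMod 2) = e then
        x ^ ∑ i, oslash r (toAdd (z i)).val else 0) =
      2 ^ (n - 1) * (∑ k ∈ range (r / 2), x ^ k) ^ n := by
  obtain ⟨k, rfl⟩ : ∃ k, n = k + 1 := ⟨n - 1, by omega⟩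
  let E : (Fin (k + 1) → Multiplicative (ZMod r)) ≃
      (Fin (k + 1) → ZMod 2) × (Fin (k + 1) → Fin (r / 2)) :=
    (Equiv.piCongrRight fun _ => Multiplicative.toAdd.trans (colorEquiv hr)).trans
      (Equiv.arrowProdEquivProdArrow _ _ _)
  let g : (Fin (k + 1) → ZMod 2) × (Fin (k + 1) → Fin (r / 2)) → R := fun p =>
    (if ∑ i, p.1 i = e then 1 else 0) * x ^ ∑ i, (p.2 i : ℕ)
  calc _ = ∑ z, g (E z) := by simp only [g, ite_mul, one_mul, zero_mul]; rfl
    _ = (∑ ε : Fin (k + 1) → ZMod 2, if ∑ i, ε i = e then 1 else 0) *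
          ∑ v : Fin (k + 1) → Fin (r / 2), x ^ ∑ i, (v i : ℕ) := by
      rw [E.sum_comp g, Fintype.sum_prod_type, sum_mul_sum]
    _ = _ := by
      rw [sum_boole, card_filter_sum_eq_card_pow, sum_pow_sum_val_fin]
      simp

theorem finvA_mk {r n : ℕ} [NeZero r] (z : Fin n → Multiplicative (ZMod r))
    (τ : Equiv.Perm (Fin n)) :
    finvA r n ⟨z, τ⟩ = r / 2 * invPerm n τ + ∑ i, oslash r (toAdd (z i)).val := by
  have hz : ∀ i, (r - zval r n (⟨z, τ⟩ : G r n)⁻¹ i) % r = (toAdd (z (τ i))).val :=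
    fun i => ZMod.sub_val_neg_mod (toAdd (z (τ i)))
  rw [finvA, Finset.sum_congr rfl fun i _ => congrArg (oslash r) (hz i)]
  congr 1
  exact Equiv.sum_comp τ fun j => oslash r (toAdd (z j)).val

theorem zmod2ToUnits_injective : Function.Injective zmod2ToUnits := by
  decide

theorem exists_parity_iff_mem_Arn {r n : ℕ} [NeZero r] (hr : 2 ∣ r) (τ : Equiv.Perm (Fin n)) :
    ∃ e : ZMod 2, ∀ z : Fin n → Multiplicative (ZMod r),
      (⟨z, τ⟩ : G r n) ∈ Arn r n hr ↔ ∑ i, ((toAdd (z i)).val : ZMod 2) = e := by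
  obtain ⟨e, he⟩ : ∃ e, zmod2ToUnits (ofAdd e) = Equiv.Perm.sign τ := by
    rcases Int.units_eq_one_or (Equiv.Perm.sign τ) with h | h
    · exact ⟨0, h.symm⟩
    · exact ⟨1, h.symm⟩
  refine ⟨e, fun z => ?_⟩
  have hg : (⟨z, τ⟩ : G r n) = SemidirectProduct.inl z * SemidirectProduct.inr τ :=
    (SemidirectProduct.inl_left_mul_inr_right _).symm
  rw [Arn, MonoidHom.mem_ker, hg, map_mul, sgn, SemidirectProduct.lift_inl,
    SemidirectProduct.lift_inr, MonoidHom.comp_apply, ← he, mul_eq_one_iff_eq_inv,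
    ← map_inv, zmod2ToUnits_injective.eq_iff, ← ofAdd_neg, ZMod.neg_eq_self_mod_two]
  simp only [csumHom, MonoidHom.coe_mk, OneHom.coe_mk, ofAdd.injective.eq_iff,
    ZMod.castHom_apply, ZMod.cast_eq_val]

end ACP

open Polynomial in
theorem finvA_genfun (r n : ℕ) (hn : 1 ≤ n) (hr : r % 4 = 2) :
    ∑ᶠ π ∈ (ACP.Arn r n (by omega) : Set (ACP.G r n)), (X : ℤ[X]) ^ ACP.finvA r n π =
      2 ^ (n - 1) * ∏ i ∈ Finset.range n,
        ∑ k ∈ Finset.range (r / 2 * (i + 1)), (X : ℤ[X]) ^ k := by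
  have : NeZero r := ⟨by omega⟩
  have hcolors (τ : Equiv.Perm (Fin n)) :
      ∑ z, (ACP.Arn r n (by omega) : Set (ACP.G r n)).indicator
          (fun π => (X : ℤ[X]) ^ ACP.finvA r n π) ⟨z, τ⟩ =
        ((X : ℤ[X]) ^ (r / 2)) ^ ACP.invPerm n τ *
          (2 ^ (n - 1) * (∑ k ∈ range (r / 2), (X : ℤ[X]) ^ k) ^ n) := by
    classical
    obtain ⟨e, he⟩ := ACP.exists_parity_iff_mem_Arn (r := r) (by omega) τ
    rw [← ACP.sum_colorVectors_of_parity X hr hn e, mul_sum]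
    refine sum_congr rfl fun z _ => ?_
    simp only [Set.indicator_apply, SetLike.mem_coe, he, ACP.finvA_mk, pow_add, pow_mul,
      mul_ite, mul_zero]
  rw [SemidirectProduct.finsum_mem_eq_sum_sum, sum_congr rfl fun τ _ => hcolors τ, ← sum_mul,
    ACP.sum_pow_invPerm]
  simp only [← geom_sum_mul_geom_sum_pow, prod_mul_distrib, prod_const, card_range]
  ring
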